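/- The set of minimal elements $(B_l)_{\min}=\{b\in B_l : \langle c,\varepsilon(b)\rangle=l\}$ equals $\{(\alpha,\beta,\beta,\beta,\beta,\alpha) : \alpha,\beta\in\mathbb{Z}_{\ge0},\ 2\alpha+3\beta\le l\}$, and for $b=(\alpha,\beta,\beta,\beta,\beta,\alpha)$ the maps satisfy $\varepsilon(b)=\varphi(b)=(l-2\alpha-3\beta)\Lambda_0+\alpha\Lambda_1+\beta\Lambda_2$; consequently $\varepsilon$ restricted to $(B_l)_{\min}$ is a bijection onto $(P_{cl}^+)_l=\{k_0\Lambda_0+k_1\Lambda_1+k_2\Lambda_2 : k_i\in\mathbb{Z}_{\ge0},\ k_0+2k_1+3k_2=l\}$. -/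

import Mathlib

/-- An element `(x₁,x₂,x₃,x̄₃,x̄₂,x̄₁)` (fields `x1 x2 x3 y3 y2 y1`). -/
structure C6 where
  x1 : ℤ
  x2 : ℤ
  x3 : ℤ
  y3 : ℤ
  y2 : ℤ
  y1 : ℤ
deriving DecidableEq

attribute [local instance] Classical.propDecidable

noncomputable section

/-- Membership in `B_{≥0}`: all coordinates nonnegative and `x₃ ≡ x̄₃ (mod 2)`. -/
def memB (b : C6) : Prop :=
  0 ≤ b.x1 ∧ 0 ≤ b.x2 ∧ 0 ≤ b.x3 ∧ 0 ≤ b.y3 ∧ 0 ≤ b.y2 ∧ 0 ≤ b.y1 ∧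
    b.x3 % 2 = b.y3 % 2

/-- Return `some b` if all coordinates are nonnegative, else `none` (i.e. `0`). -/
def chk (b : C6) : Option C6 :=
  if 0 ≤ b.x1 ∧ 0 ≤ b.x2 ∧ 0 ≤ b.x3 ∧ 0 ≤ b.y3 ∧ 0 ≤ b.y2 ∧ 0 ≤ b.y1 then some b
  else none

def zz1 (b : C6) : ℤ := b.y1 - b.x1
def zz2 (b : C6) : ℤ := b.y2 - b.y3
def zz3 (b : C6) : ℤ := b.x3 - b.x2
def zz4 (b : C6) : ℤ := (b.y3 - b.x3) / 2

def F1c (b : C6) : Prop :=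
  zz1 b + zz2 b + zz3 b + 3 * zz4 b ≤ 0 ∧ zz1 b + zz2 b + 3 * zz4 b ≤ 0 ∧
    zz1 b + zz2 b ≤ 0 ∧ zz1 b ≤ 0
def F2c (b : C6) : Prop :=
  zz1 b + zz2 b + zz3 b + 3 * zz4 b ≤ 0 ∧ zz2 b + 3 * zz4 b ≤ 0 ∧
    zz2 b ≤ 0 ∧ 0 < zz1 b
def F3c (b : C6) : Prop :=
  zz1 b + zz3 b + 3 * zz4 b ≤ 0 ∧ zz3 b + 3 * zz4 b ≤ 0 ∧ zz4 b ≤ 0 ∧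
    0 < zz2 b ∧ 0 < zz1 b + zz2 b
def F4c (b : C6) : Prop :=
  0 < zz1 b + zz2 b + 3 * zz4 b ∧ 0 < zz2 b + 3 * zz4 b ∧ 0 < zz4 b ∧
    zz3 b ≤ 0 ∧ zz1 b + zz3 b ≤ 0
def F5c (b : C6) : Prop :=
  0 < zz1 b + zz2 b + zz3 b + 3 * zz4 b ∧ 0 < zz3 b + 3 * zz4 b ∧
    0 < zz3 b ∧ zz1 b ≤ 0
def F6c (b : C6) : Prop :=
  0 < zz1 b + zz2 b + zz3 b + 3 * zz4 b ∧ 0 < zz1 b + zz3 b + 3 * zz4 b ∧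
    0 < zz1 b + zz3 b ∧ 0 < zz1 b

def E1c (b : C6) : Prop :=
  zz1 b + zz2 b + zz3 b + 3 * zz4 b < 0 ∧ zz1 b + zz2 b + 3 * zz4 b < 0 ∧
    zz1 b + zz2 b < 0 ∧ zz1 b < 0
def E2c (b : C6) : Prop :=
  zz1 b + zz2 b + zz3 b + 3 * zz4 b < 0 ∧ zz2 b + 3 * zz4 b < 0 ∧
    zz2 b < 0 ∧ 0 ≤ zz1 b
def E3c (b : C6) : Prop :=
  zz1 b + zz3 b + 3 * zz4 b < 0 ∧ zz3 b + 3 * zz4 b < 0 ∧ zz4 b < 0 ∧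
    0 ≤ zz2 b ∧ 0 ≤ zz1 b + zz2 b
def E4c (b : C6) : Prop :=
  0 ≤ zz1 b + zz2 b + 3 * zz4 b ∧ 0 ≤ zz2 b + 3 * zz4 b ∧ 0 ≤ zz4 b ∧
    zz3 b < 0 ∧ zz1 b + zz3 b < 0
def E5c (b : C6) : Prop :=
  0 ≤ zz1 b + zz2 b + zz3 b + 3 * zz4 b ∧ 0 ≤ zz3 b + 3 * zz4 b ∧
    0 ≤ zz3 b ∧ zz1 b < 0
def E6c (b : C6) : Prop :=
  0 ≤ zz1 b + zz2 b + zz3 b + 3 * zz4 b ∧ 0 ≤ zz1 b + zz3 b + 3 * zz4 b ∧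
    0 ≤ zz1 b + zz3 b ∧ 0 ≤ zz1 b

/-- The operator `f̃₀` on `B_{≥0}`, given by the six cases `(F₁)–(F₆)`. -/
def f0op (b : C6) : Option C6 :=
  if F1c b then chk ⟨b.x1 + 1, b.x2, b.x3, b.y3, b.y2, b.y1⟩
  else if F2c b then chk ⟨b.x1, b.x2, b.x3 + 1, b.y3 + 1, b.y2, b.y1 - 1⟩
  else if F3c b then chk ⟨b.x1, b.x2, b.x3 + 2, b.y3, b.y2 - 1, b.y1⟩
  else if F4c b then chk ⟨b.x1, b.x2 + 1, b.x3, b.y3 - 2, b.y2, b.y1⟩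
  else if F5c b then chk ⟨b.x1 + 1, b.x2, b.x3 - 1, b.y3 - 1, b.y2, b.y1⟩
  else if F6c b then chk ⟨b.x1, b.x2, b.x3, b.y3, b.y2, b.y1 - 1⟩
  else none

/-- The operator `ẽ₀` on `B_{≥0}`, given by the six cases `(E₁)–(E₆)`. -/
def e0op (b : C6) : Option C6 :=
  if E1c b then chk ⟨b.x1 - 1, b.x2, b.x3, b.y3, b.y2, b.y1⟩
  else if E2c b then chk ⟨b.x1, b.x2, b.x3 - 1, b.y3 - 1, b.y2, b.y1 + 1⟩
  else if E3c b then chk ⟨b.x1, b.x2, b.x3 - 2, b.y3, b.y2 + 1, b.y1⟩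
  else if E4c b then chk ⟨b.x1, b.x2 - 1, b.x3, b.y3 + 2, b.y2, b.y1⟩
  else if E5c b then chk ⟨b.x1 - 1, b.x2, b.x3 + 1, b.y3 + 1, b.y2, b.y1⟩
  else if E6c b then chk ⟨b.x1, b.x2, b.x3, b.y3, b.y2, b.y1 + 1⟩
  else none

/-- `s(b) = x₁+x₂+(x₃+x̄₃)/2+x̄₂+x̄₁`. -/
def sB (b : C6) : ℤ := b.x1 + b.x2 + (b.x3 + b.y3) / 2 + b.y2 + b.y1

/-- `max A` for `A = (0, z₁, z₁+z₂, z₁+z₂+3z₄, z₁+z₂+z₃+3z₄, 2z₁+z₂+z₃+3z₄)`. -/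
def maxA (b : C6) : ℤ :=
  max 0 (max (zz1 b) (max (zz1 b + zz2 b) (max (zz1 b + zz2 b + 3 * zz4 b)
    (max (zz1 b + zz2 b + zz3 b + 3 * zz4 b)
      (2 * zz1 b + zz2 b + zz3 b + 3 * zz4 b)))))

def phi0 (l : ℤ) (b : C6) : ℤ := l - sB b + maxA b

def eps0 (l : ℤ) (b : C6) : ℤ :=
  l - sB b + maxA b - (2 * zz1 b + zz2 b + zz3 b + 3 * zz4 b)

def eps1 (b : C6) : ℤ := b.y1 + max (b.y3 - b.y2 + max (b.x2 - b.x3) 0) 0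
def phi1 (b : C6) : ℤ := b.x1 + max (b.x3 - b.x2 + max (b.y2 - b.y3) 0) 0
def eps2 (b : C6) : ℤ := b.y2 + max (b.x3 - b.y3) 0 / 2
def phi2 (b : C6) : ℤ := b.x2 + max (b.y3 - b.x3) 0 / 2

/-!
In the coordinates `z₁, …, z₄` of the standard parametrization a direct computation gives
`⟨c, ε(b)⟩ = l + (max A - z₁) + z₂ + 2 (max(-z₃, 0) - z₂)₊ + 3 (-z₄)₊`.
The excess over `l` is nonnegative and vanishes exactly when `z = 0`, i.e. (using the parity
condition for `z₄`) when `b = (α, β, β, β, β, α)`. On such `b` every piecewise formula for `ε`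
and `φ` collapses, and `ε` is inverted on the level-`l` weights by `k ↦ (k₁, k₂, k₂, k₂, k₂, k₁)`.
-/

def diag (a c : ℤ) : C6 := ⟨a, c, c, c, c, a⟩

def levelExcess (b : C6) : ℤ :=
  maxA b - zz1 b + zz2 b + 2 * max (max (-zz3 b) 0 - zz2 b) 0 + 3 * max (-zz4 b) 0

theorem level_eps_eq (l : ℤ) {b : C6} (hb : b.x3 % 2 = b.y3 % 2) :
    eps0 l b + 2 * eps1 b + 3 * eps2 b = l + levelExcess b := by
  simp only [eps0, eps1, eps2, levelExcess, sB, zz1, zz2, zz3, zz4]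
  omega

theorem levelExcess_eq_zero_iff (b : C6) :
    levelExcess b = 0 ↔ zz1 b = 0 ∧ zz2 b = 0 ∧ zz3 b = 0 ∧ zz4 b = 0 := by
  -- Vanishing forces `z₂ = 0`, `z₃, z₄ ≥ 0` and `max A = z₁`; the last then pins `z₁ = z₃ = z₄ = 0`.
  simp only [levelExcess, maxA]
  omega

theorem zz_eq_zero_iff {b : C6} (hb : b.x3 % 2 = b.y3 % 2) :
    (zz1 b = 0 ∧ zz2 b = 0 ∧ zz3 b = 0 ∧ zz4 b = 0) ↔ b = diag b.x1 b.x2 := by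
  obtain ⟨x1, x2, x3, y3, y2, y1⟩ := b
  simp only [zz1, zz2, zz3, zz4, diag, C6.mk.injEq, true_and] at hb ⊢
  omega

theorem level_eps_eq_iff (l : ℤ) {b : C6} (hb : b.x3 % 2 = b.y3 % 2) :
    eps0 l b + 2 * eps1 b + 3 * eps2 b = l ↔ b = diag b.x1 b.x2 := by
  rw [level_eps_eq l hb, add_eq_left, levelExcess_eq_zero_iff, zz_eq_zero_iff hb]

theorem memB_diag {a c : ℤ} (ha : 0 ≤ a) (hc : 0 ≤ c) : memB (diag a c) :=
  ⟨ha, hc, hc, hc, hc, ha, rfl⟩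

theorem sB_diag (a c : ℤ) : sB (diag a c) = 2 * a + 3 * c := by
  simp only [sB, diag]
  omega

theorem eps_phi_diag (l a c : ℤ) :
    eps0 l (diag a c) = l - 2 * a - 3 * c ∧ eps1 (diag a c) = a ∧ eps2 (diag a c) = c ∧
      phi0 l (diag a c) = l - 2 * a - 3 * c ∧ phi1 (diag a c) = a ∧ phi2 (diag a c) = c := by
  simp only [eps0, eps1, eps2, phi0, phi1, phi2, sB, maxA, zz1, zz2, zz3, zz4, diag]
  omega

theorem minimal_set_eq (l : ℤ) :
    {b : C6 | (memB b ∧ sB b ≤ l) ∧ eps0 l b + 2 * eps1 b + 3 * eps2 b = l}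
      = {b : C6 | ∃ a c : ℤ, 0 ≤ a ∧ 0 ≤ c ∧ 2 * a + 3 * c ≤ l ∧ b = diag a c} := by
  ext b
  constructor
  · rintro ⟨⟨hb, hs⟩, hlevel⟩
    have hdiag := (level_eps_eq_iff l hb.2.2.2.2.2.2).mp hlevel
    rw [hdiag, sB_diag] at hs
    exact ⟨b.x1, b.x2, hb.1, hb.2.1, hs, hdiag⟩
  · rintro ⟨a, c, ha, hc, hs, rfl⟩
    exact ⟨⟨memB_diag ha hc, (sB_diag a c).trans_le hs⟩, (level_eps_eq_iff l rfl).mpr rfl⟩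

theorem bijOn_eps_diag (l : ℤ) :
    Set.BijOn (fun b => (eps0 l b, eps1 b, eps2 b))
      {b : C6 | ∃ a c : ℤ, 0 ≤ a ∧ 0 ≤ c ∧ 2 * a + 3 * c ≤ l ∧ b = diag a c}
      {k : ℤ × ℤ × ℤ | 0 ≤ k.1 ∧ 0 ≤ k.2.1 ∧ 0 ≤ k.2.2 ∧
        k.1 + 2 * k.2.1 + 3 * k.2.2 = l} := by
  refine Set.InvOn.bijOn (f' := fun k => diag k.2.1 k.2.2) ⟨?_, ?_⟩ ?_ ?_
  · rintro _ ⟨a, c, -, -, -, rfl⟩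
    obtain ⟨-, h1, h2, -⟩ := eps_phi_diag l a c
    simp only [h1, h2]
  · rintro ⟨k0, k1, k2⟩ ⟨-, -, -, hk⟩
    dsimp only at hk ⊢
    obtain ⟨h0, h1, h2, -⟩ := eps_phi_diag l k1 k2
    simp only [h0, h1, h2, Prod.mk.injEq, and_true]
    omega
  · rintro _ ⟨a, c, ha, hc, hs, rfl⟩
    obtain ⟨h0, h1, h2, -⟩ := eps_phi_diag l a c
    refine ⟨?_, ?_, ?_, ?_⟩ <;> dsimp only <;> omega
  · rintro ⟨k0, k1, k2⟩ ⟨h0, h1, h2, hk⟩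
    dsimp only at h0 h1 h2 hk
    exact ⟨k1, k2, h1, h2, by omega, rfl⟩

theorem minimal_elements_general (l : ℤ) :
    {b : C6 | (memB b ∧ sB b ≤ l) ∧ eps0 l b + 2 * eps1 b + 3 * eps2 b = l}
      = {b : C6 | ∃ a c : ℤ, 0 ≤ a ∧ 0 ≤ c ∧ 2 * a + 3 * c ≤ l ∧
          b = ⟨a, c, c, c, c, a⟩} ∧
    (∀ a c : ℤ, 0 ≤ a → 0 ≤ c → 2 * a + 3 * c ≤ l →
      (eps0 l ⟨a, c, c, c, c, a⟩ = l - 2 * a - 3 * c ∧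
       eps1 ⟨a, c, c, c, c, a⟩ = a ∧ eps2 ⟨a, c, c, c, c, a⟩ = c ∧
       phi0 l ⟨a, c, c, c, c, a⟩ = l - 2 * a - 3 * c ∧
       phi1 ⟨a, c, c, c, c, a⟩ = a ∧ phi2 ⟨a, c, c, c, c, a⟩ = c)) ∧
    Set.BijOn (fun b => (eps0 l b, eps1 b, eps2 b))
      {b : C6 | (memB b ∧ sB b ≤ l) ∧ eps0 l b + 2 * eps1 b + 3 * eps2 b = l}
      {k : ℤ × ℤ × ℤ | 0 ≤ k.1 ∧ 0 ≤ k.2.1 ∧ 0 ≤ k.2.2 ∧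
        k.1 + 2 * k.2.1 + 3 * k.2.2 = l} := by
  refine ⟨minimal_set_eq l, fun a c _ _ _ => eps_phi_diag l a c, ?_⟩
  rw [minimal_set_eq l]
  exact bijOn_eps_diag l

/-- The minimal elements of `B_l` are exactly `(α,β,β,β,β,α)` with
`2α+3β ≤ l`; on them `ε = φ = (l-2α-3β)Λ₀ + αΛ₁ + βΛ₂`, and `ε` is a bijection
from `(B_l)_min` onto the level-`l` dominant weights
`{(k₀,k₁,k₂) : kᵢ ≥ 0, k₀+2k₁+3k₂ = l}`. -/
theorem minimal_elements (l : ℤ) (hl : 0 < l) :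
    {b : C6 | (memB b ∧ sB b ≤ l) ∧ eps0 l b + 2 * eps1 b + 3 * eps2 b = l}
      = {b : C6 | ∃ a c : ℤ, 0 ≤ a ∧ 0 ≤ c ∧ 2 * a + 3 * c ≤ l ∧
          b = ⟨a, c, c, c, c, a⟩} ∧
    (∀ a c : ℤ, 0 ≤ a → 0 ≤ c → 2 * a + 3 * c ≤ l →
      (eps0 l ⟨a, c, c, c, c, a⟩ = l - 2 * a - 3 * c ∧
       eps1 ⟨a, c, c, c, c, a⟩ = a ∧ eps2 ⟨a, c, c, c, c, a⟩ = c ∧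
       phi0 l ⟨a, c, c, c, c, a⟩ = l - 2 * a - 3 * c ∧
       phi1 ⟨a, c, c, c, c, a⟩ = a ∧ phi2 ⟨a, c, c, c, c, a⟩ = c)) ∧
    Set.BijOn (fun b => (eps0 l b, eps1 b, eps2 b))
      {b : C6 | (memB b ∧ sB b ≤ l) ∧ eps0 l b + 2 * eps1 b + 3 * eps2 b = l}
      {k : ℤ × ℤ × ℤ | 0 ≤ k.1 ∧ 0 ≤ k.2.1 ∧ 0 ≤ k.2.2 ∧
        k.1 + 2 * k.2.1 + 3 * k.2.2 = l} :=
  minimal_elements_general l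

end
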